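/- Let R be a commutative ring, J an ideal, and L ⊆ M R-modules. Then the J-basically empty interior is idempotent: J•(J•(L :_M J) :_M J) = J•(L :_M J). -/

import Mathlib

/-- The colon submodule `(L :_M J) = {x ∈ M : J • x ⊆ L}`. -/
def Submodule.icolon {R M : Type*} [CommRing R] [AddCommGroup M] [Module R M]
    (L : Submodule R M) (J : Ideal R) : Submodule R M where
  carrier := {x | ∀ r ∈ J, r • x ∈ L}
  add_mem' := fun {a b} ha hb r hr => by
    rw [smul_add]; exact L.add_mem (ha r hr) (hb r hr)
  zero_mem' := fun r hr => by simp
  smul_mem' := fun c x hx r hr => by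
    rw [smul_comm]; exact L.smul_mem c (hx r hr)

/-! `J • (-)` is left adjoint to `(- :_M J)`, and for any Galois connection `l ⊣ u` the
composite `l ∘ u` is idempotent, since `l ∘ u ∘ l = l`. -/

namespace Submodule

variable {R M : Type*} [CommRing R] [AddCommGroup M] [Module R M]

theorem smul_le_iff_le_icolon {J : Ideal R} {N L : Submodule R M} :
    J • N ≤ L ↔ N ≤ L.icolon J :=
  ⟨fun h _ hx _ hr => h (smul_mem_smul hr hx),
    fun h => smul_le.mpr fun _ hr _ hx => h hx _ hr⟩

theorem gc_smul_icolon (J : Ideal R) :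
    GaloisConnection (J • · : Submodule R M → Submodule R M) (·.icolon J) :=
  fun _ _ => smul_le_iff_le_icolon

end Submodule

/-- The J-basically empty interior is idempotent. -/
theorem jbe_idempotent {R M : Type*} [CommRing R] [AddCommGroup M] [Module R M]
    (J : Ideal R) (L : Submodule R M) :
    J • ((J • (L.icolon J)).icolon J) = J • (L.icolon J) :=
  (Submodule.gc_smul_icolon J).l_u_l_eq_l (L.icolon J)
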